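/- Let γ = (c_1,…,c_n) be a clan. Then γ avoids all seven patterns (1,+,−,1), (1,−,+,1), (1,2,1,2), (1,+,2,2,1), (1,−,2,2,1), (1,2,2,+,1), (1,2,2,−,1) if and only if the following three conditions hold: (a) no two pairs of γ cross (i.e., there are no indices i<s<j<t with (i,j) and (s,t) both pairs of γ); (b) for every pair (i,j) of γ, all sign entries c_k with i<k<j are equal; and (c) for every pair (i,j) of γ, every sign entry c_k with i<k<j, and every pair (s,t) of γ with i<s<t<j, one has s<k<t. -/
import Mathlib


/-- An entry of a clan: a plus sign, a minus sign, or a natural number. -/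
inductive CEntry : Type where
  | plus : CEntry
  | minus : CEntry
  | num : ℕ → CEntry
deriving DecidableEq

/-- Whether an entry is a natural number. -/
def CEntry.isNum : CEntry → Bool
  | .num _ => true
  | _ => false

/-- Whether an entry is a sign (`+` or `−`). -/
def CEntry.isSign : CEntry → Bool
  | .num _ => false
  | _ => true

/-- A clan of signature `(p, q)`: a sequence of `n = p + q` symbols, each `+`, `−`, or a
natural number, such that every natural number occurring in the sequence occurs exactly
twice, and the number of `+` entries plus the number of pairs of equal numbers is `p`. -/
structure Clan (n p q : ℕ) : Type where
  c : Fin n → CEntry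
  total : n = p + q
  twice : ∀ a : ℕ, (Finset.univ.filter fun i => c i = CEntry.num a).card = 0 ∨
      (Finset.univ.filter fun i => c i = CEntry.num a).card = 2
  signature : (Finset.univ.filter fun i => c i = CEntry.plus).card
      + (Finset.univ.filter fun i => (c i).isNum = true).card / 2 = p

namespace Clan

variable {n p q : ℕ}

/-- `(i, j)` is a pair of the clan `γ`: `i < j` and `c i = c j` is a natural number. -/
def IsPair (γ : Clan n p q) (i j : Fin n) : Prop :=
  i < j ∧ γ.c i = γ.c j ∧ (γ.c i).isNum = true

instance (γ : Clan n p q) (i j : Fin n) : Decidable (γ.IsPair i j) := by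
  unfold IsPair; infer_instance

/-- The finset of all pairs of the clan `γ`. -/
def pairs (γ : Clan n p q) : Finset (Fin n × Fin n) :=
  Finset.univ.filter fun x => γ.IsPair x.1 x.2

/-- The contribution `j − i − #{pairs (s,t) of γ with s < i < t < j}` of a pair `(i, j)`
to the dimension of the orbit parametrized by `γ`. -/
def summand (γ : Clan n p q) (x : Fin n × Fin n) : ℕ :=
  (x.2 : ℕ) - (x.1 : ℕ) -
    (γ.pairs.filter fun y => y.1 < x.1 ∧ x.1 < y.2 ∧ y.2 < x.2).card

/-- `d_{p,q} = (p(p−1) + q(q−1))/2`, the dimension of the closed orbits. -/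
def dpq (p q : ℕ) : ℕ := (p * (p - 1) + q * (q - 1)) / 2

/-- The dimension of the `GL_p × GL_q`-orbit on the flag variety parametrized by `γ`. -/
def D (γ : Clan n p q) : ℕ := dpq p q + ∑ x ∈ γ.pairs, γ.summand x

/-- `γ` includes the pattern `(1, +, −, 1)`. -/
def Includes1pm1 (γ : Clan n p q) : Prop :=
  ∃ i k l j : Fin n, i < k ∧ k < l ∧ l < j ∧
    γ.c k = CEntry.plus ∧ γ.c l = CEntry.minus ∧ γ.IsPair i j

/-- `γ` includes the pattern `(1, −, +, 1)`. -/
def Includes1mp1 (γ : Clan n p q) : Prop :=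
  ∃ i k l j : Fin n, i < k ∧ k < l ∧ l < j ∧
    γ.c k = CEntry.minus ∧ γ.c l = CEntry.plus ∧ γ.IsPair i j

/-- `γ` includes the pattern `(1, 2, 1, 2)`. -/
def Includes1212 (γ : Clan n p q) : Prop :=
  ∃ i s j t : Fin n, i < s ∧ s < j ∧ j < t ∧
    γ.IsPair i j ∧ γ.IsPair s t ∧ γ.c i ≠ γ.c s

/-- `γ` includes the pattern `(1, +, 2, 2, 1)`. -/
def Includes1p221 (γ : Clan n p q) : Prop :=
  ∃ i k s t j : Fin n, i < k ∧ k < s ∧ s < t ∧ t < j ∧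
    γ.c k = CEntry.plus ∧ γ.IsPair i j ∧ γ.IsPair s t ∧ γ.c i ≠ γ.c s

/-- `γ` includes the pattern `(1, −, 2, 2, 1)`. -/
def Includes1m221 (γ : Clan n p q) : Prop :=
  ∃ i k s t j : Fin n, i < k ∧ k < s ∧ s < t ∧ t < j ∧
    γ.c k = CEntry.minus ∧ γ.IsPair i j ∧ γ.IsPair s t ∧ γ.c i ≠ γ.c s

/-- `γ` includes the pattern `(1, 2, 2, +, 1)`. -/
def Includes122p1 (γ : Clan n p q) : Prop :=
  ∃ i s t k j : Fin n, i < s ∧ s < t ∧ t < k ∧ k < j ∧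
    γ.c k = CEntry.plus ∧ γ.IsPair i j ∧ γ.IsPair s t ∧ γ.c i ≠ γ.c s

/-- `γ` includes the pattern `(1, 2, 2, −, 1)`. -/
def Includes122m1 (γ : Clan n p q) : Prop :=
  ∃ i s t k j : Fin n, i < s ∧ s < t ∧ t < k ∧ k < j ∧
    γ.c k = CEntry.minus ∧ γ.IsPair i j ∧ γ.IsPair s t ∧ γ.c i ≠ γ.c s

/-- `γ` avoids the seven patterns `(1,+,−,1)`, `(1,−,+,1)`, `(1,2,1,2)`, `(1,+,2,2,1)`,
`(1,−,2,2,1)`, `(1,2,2,+,1)`, `(1,2,2,−,1)`. -/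
def AvoidsSeven (γ : Clan n p q) : Prop :=
  ¬ γ.Includes1pm1 ∧ ¬ γ.Includes1mp1 ∧ ¬ γ.Includes1212 ∧
    ¬ γ.Includes1p221 ∧ ¬ γ.Includes1m221 ∧ ¬ γ.Includes122p1 ∧ ¬ γ.Includes122m1

end Clan

/-- The move replacing a pair of opposite signs of `γ` in positions `i < j` by a pair of
equal numbers not occurring in `γ`, yielding `γ'`. -/
def ReplaceMove {n p q : ℕ} (γ γ' : Clan n p q) : Prop :=
  ∃ i j : Fin n, i < j ∧
    ((γ.c i = CEntry.plus ∧ γ.c j = CEntry.minus) ∨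
      (γ.c i = CEntry.minus ∧ γ.c j = CEntry.plus)) ∧
    (∃ a : ℕ, (∀ k, γ.c k ≠ CEntry.num a) ∧
      γ'.c i = CEntry.num a ∧ γ'.c j = CEntry.num a) ∧
    ∀ k, k ≠ i → k ≠ j → γ'.c k = γ.c k

lemma CEntry.exists_num {e : CEntry} (h : e.isNum = true) : ∃ a, e = CEntry.num a := by
  cases e <;> simp [CEntry.isNum] at h ⊢

lemma CEntry.sign_ne_num {e : CEntry} (h : e.isSign = true) (a : ℕ) : e ≠ CEntry.num a := by
  cases e <;> simp [CEntry.isSign] at h ⊢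

lemma three_distinct_num {n p q : ℕ} (γ : Clan n p q) {a : ℕ} {x y z : Fin n}
    (hxy : x ≠ y) (hxz : x ≠ z) (hyz : y ≠ z)
    (hx : γ.c x = CEntry.num a) (hy : γ.c y = CEntry.num a) (hz : γ.c z = CEntry.num a) :
    False := by
  have htw := γ.twice a
  have hsub : ({x, y, z} : Finset (Fin n)) ⊆
      Finset.univ.filter fun i => γ.c i = CEntry.num a := by
    intro w hw
    simp only [Finset.mem_insert, Finset.mem_singleton] at hw
    simp only [Finset.mem_filter, Finset.mem_univ, true_and]
    rcases hw with rfl | rfl | rfl <;> assumption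
  have hcard : ({x, y, z} : Finset (Fin n)).card = 3 := by
    rw [Finset.card_insert_of_notMem (by simp [hxy, hxz]),
        Finset.card_insert_of_notMem (by simp [hyz]), Finset.card_singleton]
  have := Finset.card_le_card hsub
  omega

/-- A clan avoids the seven patterns iff (a) no two pairs cross, (b) all
signs strictly between a pair are equal, and (c) any sign strictly between a pair lies
strictly between every pair enclosed by it. -/
theorem avoidsSeven_iff {n p q : ℕ} (γ : Clan n p q) :
    γ.AvoidsSeven ↔
      ((¬ ∃ i s j t : Fin n, i < s ∧ s < j ∧ j < t ∧ γ.IsPair i j ∧ γ.IsPair s t) ∧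
       (∀ i j : Fin n, γ.IsPair i j →
          ∀ k l : Fin n, i < k → k < j → i < l → l < j →
            (γ.c k).isSign = true → (γ.c l).isSign = true → γ.c k = γ.c l) ∧
       (∀ i j : Fin n, γ.IsPair i j →
          ∀ k : Fin n, i < k → k < j → (γ.c k).isSign = true →
            ∀ s t : Fin n, γ.IsPair s t → i < s → t < j → s < k ∧ k < t))  := by
  constructor
  · rintro ⟨h1, h2, h3, h4, h5, h6, h7⟩
    refine ⟨?_, ?_, ?_⟩
    · rintro ⟨i, s, j, t, his, hsj, hjt, hij, hst⟩
      by_cases hcs : γ.c i = γ.c s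
      · obtain ⟨a, ha⟩ := CEntry.exists_num hij.2.2
        exact three_distinct_num γ (x := i) (y := s) (z := j) (Fin.ne_of_lt his)
          (Fin.ne_of_lt (his.trans hsj)) (Fin.ne_of_lt hsj)
          ha (hcs ▸ ha) (hij.2.1 ▸ ha)
      · exact h3 ⟨i, s, j, t, his, hsj, hjt, hij, hst, hcs⟩
    · intro i j hij k l hik hkj hil hlj hk hl
      rcases lt_trichotomy k l with hkl | rfl | hlk
      · cases hck : γ.c k with
        | num m => rw [hck] at hk; simp [CEntry.isSign] at hk
        | plus => cases hcl : γ.c l with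
          | num m => rw [hcl] at hl; simp [CEntry.isSign] at hl
          | plus => rfl
          | minus => exact absurd ⟨i, k, l, j, hik, hkl, hlj, hck, hcl, hij⟩ h1
        | minus => cases hcl : γ.c l with
          | num m => rw [hcl] at hl; simp [CEntry.isSign] at hl
          | minus => rfl
          | plus => exact absurd ⟨i, k, l, j, hik, hkl, hlj, hck, hcl, hij⟩ h2
      · rfl
      · cases hck : γ.c k with
        | num m => rw [hck] at hk; simp [CEntry.isSign] at hk
        | plus => cases hcl : γ.c l with
          | num m => rw [hcl] at hl; simp [CEntry.isSign] at hl
          | plus => rfl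
          | minus => exact absurd ⟨i, l, k, j, hil, hlk, hkj, hcl, hck, hij⟩ h2
        | minus => cases hcl : γ.c l with
          | num m => rw [hcl] at hl; simp [CEntry.isSign] at hl
          | minus => rfl
          | plus => exact absurd ⟨i, l, k, j, hil, hlk, hkj, hcl, hck, hij⟩ h1
    · intro i j hij k hik hkj hk s t hst his htj
      have hcis : γ.c i ≠ γ.c s := by
        intro hcs
        obtain ⟨a, ha⟩ := CEntry.exists_num hij.2.2
        exact three_distinct_num γ (x := i) (y := s) (z := t) (Fin.ne_of_lt his)
          (Fin.ne_of_lt (his.trans hst.1)) (Fin.ne_of_lt hst.1)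
          ha (hcs ▸ ha) (hst.2.1 ▸ hcs ▸ ha)
      have hks : k ≠ s := by
        intro h; subst h
        obtain ⟨a, ha⟩ := CEntry.exists_num hst.2.2
        exact CEntry.sign_ne_num hk a ha
      have hkt : k ≠ t := by
        intro h; subst h
        obtain ⟨a, ha⟩ := CEntry.exists_num hst.2.2
        exact CEntry.sign_ne_num hk a (hst.2.1 ▸ ha)
      constructor
      · rcases lt_trichotomy s k with h' | h' | h'
        · exact h'
        · exact absurd h' hks.symm
        · exfalso
          cases hck : γ.c k with
          | num m => rw [hck] at hk; simp [CEntry.isSign] at hk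
          | plus => exact h4 ⟨i, k, s, t, j, hik, h', hst.1, htj, hck, hij, hst, hcis⟩
          | minus => exact h5 ⟨i, k, s, t, j, hik, h', hst.1, htj, hck, hij, hst, hcis⟩
      · rcases lt_trichotomy k t with h' | h' | h'
        · exact h'
        · exact absurd h' hkt
        · exfalso
          cases hck : γ.c k with
          | num m => rw [hck] at hk; simp [CEntry.isSign] at hk
          | plus => exact h6 ⟨i, s, t, k, j, his, hst.1, h', hkj, hck, hij, hst, hcis⟩
          | minus => exact h7 ⟨i, s, t, k, j, his, hst.1, h', hkj, hck, hij, hst, hcis⟩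
  · rintro ⟨ha, hb, hc⟩
    refine ⟨?_, ?_, ?_, ?_, ?_, ?_, ?_⟩
    · rintro ⟨i, k, l, j, hik, hkl, hlj, hck, hcl, hij⟩
      have := hb i j hij k l hik (hkl.trans hlj) (hik.trans hkl) hlj
        (by rw [hck]; rfl) (by rw [hcl]; rfl)
      rw [hck, hcl] at this; exact CEntry.noConfusion this
    · rintro ⟨i, k, l, j, hik, hkl, hlj, hck, hcl, hij⟩
      have := hb i j hij k l hik (hkl.trans hlj) (hik.trans hkl) hlj
        (by rw [hck]; rfl) (by rw [hcl]; rfl)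
      rw [hck, hcl] at this; exact CEntry.noConfusion this
    · rintro ⟨i, s, j, t, his, hsj, hjt, hij, hst, _⟩
      exact ha ⟨i, s, j, t, his, hsj, hjt, hij, hst⟩
    · rintro ⟨i, k, s, t, j, hik, hks, hst', htj, hck, hij, hst, _⟩
      have := (hc i j hij k hik (hks.trans (hst'.trans htj)) (by rw [hck]; rfl)
        s t hst (hik.trans hks) htj).1
      exact absurd hks (not_lt.mpr this.le)
    · rintro ⟨i, k, s, t, j, hik, hks, hst', htj, hck, hij, hst, _⟩
      have := (hc i j hij k hik (hks.trans (hst'.trans htj)) (by rw [hck]; rfl)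
        s t hst (hik.trans hks) htj).1
      exact absurd hks (not_lt.mpr this.le)
    · rintro ⟨i, s, t, k, j, his, hst', htk, hkj, hck, hij, hst, _⟩
      have := (hc i j hij k (his.trans (hst'.trans htk)) hkj (by rw [hck]; rfl)
        s t hst his (htk.trans hkj)).2
      exact absurd htk (not_lt.mpr this.le)
    · rintro ⟨i, s, t, k, j, his, hst', htk, hkj, hck, hij, hst, _⟩
      have := (hc i j hij k (his.trans (hst'.trans htk)) hkj (by rw [hck]; rfl)
        s t hst his (htk.trans hkj)).2
      exact absurd htk (not_lt.mpr this.le)
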